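/- Let q be a prime power, n a positive integer, and f ∈ F_q[x] a monic divisor of x^n − 1 of degree k. Let η be a nontrivial multiplicative character of F_{q^n} (extended by η(0) = 0) and ψ a nontrivial additive character of F_{q^n}. Then |Σ_{w ∈ F_{q^n}} η(L_f(w)) · ψ(w)| ≤ q^{n/2 + k}. -/

import Mathlib

open Polynomial

/-- The `q`-associate of `f` applied to `x`: `L_f(x) = Σᵢ aᵢ x^(q^i)`. -/
noncomputable def qAssoc (q : ℕ) {F E : Type*} [CommSemiring F] [CommSemiring E] [Algebra F E]
    (f : Polynomial F) (x : E) : E :=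
  f.sum fun i a => algebraMap F E a * x ^ q ^ i

/-- `g` is the `F_q`-order of `α`: `g` is the monic generator of the ideal of
polynomials `f` with `L_f(α) = 0`. -/
def IsFqOrder (q : ℕ) {F E : Type*} [CommSemiring F] [CommSemiring E] [Algebra F E]
    (α : E) (g : Polynomial F) : Prop :=
  g.Monic ∧ ∀ f : Polynomial F, qAssoc q f α = 0 ↔ g ∣ f

/-- `α` is `k`-normal over `F`: the span of the conjugates `α^(q^i)`, `0 ≤ i ≤ n-1`,
has dimension `n - k`. -/
def IskNormal (q n k : ℕ) (F : Type*) {E : Type*} [Field F] [Field E] [Algebra F E]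
    (α : E) : Prop :=
  Module.finrank F (Submodule.span F (Set.range fun i : Fin n => α ^ q ^ (i : ℕ))) = n - k

/-- `α` is a primitive element of the finite field `E`: it generates `Eˣ`. -/
def IsPrimitiveElt {E : Type*} [Field E] (α : E) : Prop :=
  ∀ x : E, x ≠ 0 → ∃ m : ℕ, x = α ^ m

-- Number of squarefree divisors of a natural number.
open Classical in
noncomputable def Wnat (t : ℕ) : ℕ := (t.divisors.filter Squarefree).card

/-- Number of monic squarefree divisors of a polynomial. -/
noncomputable def Wpoly {F : Type*} [Field F] (g : Polynomial F) : ℕ :=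
  Set.ncard {h : Polynomial F | h.Monic ∧ Squarefree h ∧ h ∣ g}

/-- Polynomial Euler function `Φ(g) = |(F[x]/⟨g⟩)ˣ|`. -/
noncomputable def PhiPoly {F : Type*} [Field F] (g : Polynomial F) : ℕ :=
  Nat.card ((Polynomial F ⧸ Ideal.span {g})ˣ)

-- The polynomial Möbius function over `F`.
open Classical in
noncomputable def muq {F : Type*} [Field F] (f : Polynomial F) : ℤ :=
  if Squarefree f then
    (-1) ^ (UniqueFactorizationMonoid.normalizedFactors f).toFinset.card
  else 0

/-- The `q`-associate of `f` as a polynomial with coefficients in the extension `E`. -/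
noncomputable def LPoly (q : ℕ) {F : Type*} (E : Type*) [CommSemiring F] [CommSemiring E]
    [Algebra F E] (f : Polynomial F) : Polynomial E :=
  f.sum fun i a => Polynomial.C (algebraMap F E a) * Polynomial.X ^ q ^ i

-- `Ψ_f = ∏_{α : m_α = f} (X - α)` over `E`.
open Classical in
noncomputable def PsiPoly (q : ℕ) {F : Type*} (E : Type*) [Field F] [Field E] [Fintype E]
    [Algebra F E] (f : Polynomial F) : Polynomial E :=
  ∏ α ∈ Finset.univ.filter (fun α : E => IsFqOrder q α f), (X - C α)

/-- `n` is `F_q`-practical: `x^n - 1` has a divisor of each degree `1 ≤ k ≤ n-1` over `F`. -/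
def FqPractical (F : Type*) [Field F] (n : ℕ) : Prop :=
  ∀ k : ℕ, 1 ≤ k → k ≤ n - 1 →
    ∃ f : Polynomial F, f.natDegree = k ∧ f ∣ (X ^ n - 1 : Polynomial F)

/-!
Expanding `η` in additive characters, `|E| η(v) = Σ_λ G(η, λ⁻¹) λ(v)`, turns the sum `S` into
`|E|⁻¹ Σ_λ G(η, λ⁻¹) Σ_w λ(L_f w) ψ(w)`. Each inner sum is `|E|` or `0`, and summed over `λ`
they give `|E| Σ_{w ∈ ker L_f} ψ(w)`; with `|G(η, λ⁻¹)| ≤ q^{n/2}` this yields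
`|S| ≤ q^{n/2} |ker L_f|`. Finally `L_f = f(σ)` for the Frobenius `σ`, so it is additive, and
its kernel consists of roots of the polynomial `Σ aᵢ X^{qⁱ}` of degree `q^k`.
-/

open Finset FiniteField

section QAssociate

variable {F E : Type*}

theorem eval_LPoly [CommSemiring F] [CommSemiring E] [Algebra F E] (q : ℕ) (f : F[X]) (x : E) :
    (LPoly q E f).eval x = qAssoc q f x := by
  simp [LPoly, qAssoc, Polynomial.sum_def, eval_finsetSum]

theorem coeff_LPoly_pow [CommSemiring F] [CommSemiring E] [Algebra F E] {q : ℕ} (hq : 1 < q)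
    (f : F[X]) (i : ℕ) : (LPoly q E f).coeff (q ^ i) = algebraMap F E (f.coeff i) := by
  simp only [LPoly, Polynomial.sum_def, finsetSum_coeff, coeff_C_mul, coeff_X_pow,
    (Nat.pow_right_injective hq).eq_iff, mul_ite, mul_one, mul_zero, sum_ite_eq, mem_support_iff]
  split_ifs with h
  · rfl
  · rw [notMem_support_iff.mp h, map_zero]

theorem natDegree_LPoly_le [CommSemiring F] [CommSemiring E] [Algebra F E] {q : ℕ} (hq : 0 < q)
    (f : F[X]) : (LPoly q E f).natDegree ≤ q ^ f.natDegree :=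
  natDegree_sum_le_of_forall_le _ _ fun i hi =>
    (natDegree_C_mul_X_pow_le _ _).trans (Nat.pow_le_pow_right hq (le_natDegree_of_mem_supp i hi))

theorem LPoly_ne_zero [Field F] [CommRing E] [Nontrivial E] [Algebra F E] {q : ℕ} (hq : 1 < q)
    {f : F[X]} (hf : f ≠ 0) : LPoly q E f ≠ 0 := by
  intro h
  have := coeff_LPoly_pow (E := E) hq f f.natDegree
  rw [h, coeff_zero, eq_comm, map_eq_zero_iff _ (algebraMap F E).injective] at this
  exact hf (leadingCoeff_eq_zero.mp this)

theorem card_filter_qAssoc_eq_zero_le [Field F] [Field E] [Fintype E] [DecidableEq E]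
    [Algebra F E] {q : ℕ} (hq : 1 < q) {f : F[X]} (hf : f ≠ 0) :
    #{x : E | qAssoc q f x = 0} ≤ q ^ f.natDegree := by
  refine (card_le_degree_of_subset_roots fun x hx => ?_).trans (natDegree_LPoly_le (by omega) f)
  rw [mem_roots (LPoly_ne_zero hq hf), IsRoot, eval_LPoly]
  simpa using hx

theorem qAssoc_card_eq_aeval_frobeniusAlgHom [Field F] [Fintype F] [CommRing E] [Algebra F E]
    (f : F[X]) (x : E) :
    qAssoc (Fintype.card F) f x = aeval (frobeniusAlgHom F E).toLinearMap f x := by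
  rw [aeval_def, eval₂_eq_sum, Polynomial.sum_def, LinearMap.sum_apply, qAssoc,
    Polynomial.sum_def]
  refine sum_congr rfl fun i _ => ?_
  simp only [Module.End.mul_apply, Module.End.pow_apply, AlgHom.coe_toLinearMap,
    Module.algebraMap_end_apply, Algebra.smul_def]
  rw [coe_frobeniusAlgHom, pow_iterate]

end QAssociate

section Characters

theorem MulChar.card_mul_eq_sum_gaussSum {R : Type*} [CommRing R] [Fintype R]
    (χ : MulChar R ℂ) (v : R) :
    (Fintype.card R : ℂ) * χ v = ∑ l : AddChar R ℂ, gaussSum χ l⁻¹ * l v := by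
  classical
  calc (Fintype.card R : ℂ) * χ v = ∑ u, χ u * ∑ l : AddChar R ℂ, l (v - u) := by
        simp_rw [AddChar.sum_apply_eq_ite, sub_eq_zero, mul_ite, mul_zero, sum_ite_eq, mem_univ,
          if_true, mul_comm]
    _ = _ := by
        simp_rw [gaussSum, mul_sum, sum_mul]
        rw [sum_comm]
        refine sum_congr rfl fun u _ => sum_congr rfl fun l _ => ?_
        rw [sub_eq_add_neg, AddChar.map_add_eq_mul, AddChar.inv_apply]
        ring

theorem norm_gaussSum_le {E : Type*} [Field E] [Fintype E] {χ : MulChar E ℂ} (hχ : χ ≠ 1)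
    (ψ : AddChar E ℂ) : ‖gaussSum χ ψ‖ ≤ √(Fintype.card E) := by
  rcases eq_or_ne ψ 1 with rfl | hψ
  · simp [gaussSum_one_right hχ]
  refine Real.le_sqrt_of_sq_le (le_of_eq ?_)
  have h := gaussSum_mul_gaussSum_eq_card hχ (AddChar.IsPrimitive.of_ne_one hψ)
  rw [← star_gaussSum_eq, RCLike.star_def, Complex.mul_conj, Complex.normSq_eq_norm_sq] at h
  exact_mod_cast h

variable {G E : Type*} [AddCommGroup G] [Fintype G]

theorem sum_addChar_sum_comp_mul [AddCommGroup E] [Fintype E] [DecidableEq E] (L : G →+ E)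
    (ψ : AddChar G ℂ) :
    ∑ l : AddChar E ℂ, ∑ w, l (L w) * ψ w = Fintype.card E * ∑ w with L w = 0, ψ w := by
  rw [sum_comm]
  simp_rw [← sum_mul, AddChar.sum_apply_eq_ite, ite_mul, zero_mul, sum_ite, sum_const_zero,
    add_zero, mul_sum]

theorem norm_sum_mulChar_comp_mul_addChar_le [Field E] [Fintype E] [DecidableEq E]
    (L : G →+ E) {η : MulChar E ℂ} (hη : η ≠ 1) (ψ : AddChar G ℂ) :
    ‖∑ w, η (L w) * ψ w‖ ≤ √(Fintype.card E) * #{w | L w = 0} := by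
  set T : AddChar E ℂ → ℂ := fun l => ∑ w, l (L w) * ψ w
  have hT : ∀ l,
      T l = ((if l.compAddMonoidHom L * ψ = 0 then Fintype.card G else 0 : ℕ) : ℂ) :=
    fun l => by rw [Nat.cast_ite, Nat.cast_zero, ← AddChar.sum_eq_ite]; rfl
  have hexpand : (Fintype.card E : ℂ) * ∑ w, η (L w) * ψ w = ∑ l, gaussSum η l⁻¹ * T l := by
    simp_rw [T, mul_sum, ← mul_assoc, MulChar.card_mul_eq_sum_gaussSum, sum_mul]
    rw [sum_comm]
  -- Each `T l` is `0` or `|G|`, so the triangle inequality over `l` is an equality.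
  have hT_norm : ∑ l, ‖T l‖ = ‖∑ l, T l‖ := by
    simp_rw [hT, ← Nat.cast_sum, Complex.norm_natCast]
    exact (Nat.cast_sum _ _).symm
  have hT_sum : ‖∑ l, T l‖ ≤ Fintype.card E * #{w | L w = 0} := by
    rw [sum_addChar_sum_comp_mul, norm_mul, Complex.norm_natCast]
    gcongr
    exact (norm_sum_le _ _).trans (by simp [AddChar.norm_apply])
  have hcard : (0 : ℝ) < Fintype.card E := by exact_mod_cast Fintype.card_pos
  refine le_of_mul_le_mul_left ?_ hcard
  calc (Fintype.card E : ℝ) * ‖∑ w, η (L w) * ψ w‖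
      = ‖∑ l, gaussSum η l⁻¹ * T l‖ := by rw [← hexpand, norm_mul, Complex.norm_natCast]
    _ ≤ ∑ l, √(Fintype.card E) * ‖T l‖ := by
        refine (norm_sum_le _ _).trans (sum_le_sum fun l _ => ?_)
        rw [norm_mul]
        gcongr
        exact norm_gaussSum_le hη _
    _ ≤ √(Fintype.card E) * (Fintype.card E * #{w | L w = 0}) := by
        rw [← mul_sum, hT_norm]
        gcongr
    _ = Fintype.card E * (√(Fintype.card E) * #{w | L w = 0}) := by ring

end Characters

theorem stmt18_general {F E : Type*} [Field F] [Fintype F] [Field E] [Fintype E] [Algebra F E]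
    (q n k : ℕ) (hq : Fintype.card F = q) (hdim : Module.finrank F E = n)
    (f : Polynomial F) (hf : f.Monic) (hdeg : f.natDegree = k)
    (η : MulChar E ℂ) (hη : η ≠ 1) (ψ : AddChar E ℂ) :
    ‖∑ w : E, η (qAssoc q f w) * ψ w‖ ≤
      (q : ℝ) ^ ((n : ℝ) / 2 + (k : ℝ)) := by
  classical
  subst hq hdeg
  have hcardE : Fintype.card E = Fintype.card F ^ n := hdim ▸ Module.card_eq_pow_finrank
  have hq : 1 < Fintype.card F := Fintype.one_lt_card
  let L := (aeval (frobeniusAlgHom F E).toLinearMap f).toAddMonoidHom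
  have hL : ∀ w, qAssoc (Fintype.card F) f w = L w := qAssoc_card_eq_aeval_frobeniusAlgHom f
  have hker : #{w : E | L w = 0} ≤ Fintype.card F ^ f.natDegree := by
    simpa only [hL] using card_filter_qAssoc_eq_zero_le (E := E) hq hf.ne_zero
  calc ‖∑ w, η (qAssoc (Fintype.card F) f w) * ψ w‖
      ≤ √(Fintype.card E) * #{w : E | L w = 0} := by
        simpa only [hL] using norm_sum_mulChar_comp_mul_addChar_le L hη ψ
    _ ≤ (Fintype.card F : ℝ) ^ ((n : ℝ) / 2) * (Fintype.card F : ℝ) ^ (f.natDegree : ℝ) := by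
        rw [hcardE, Nat.cast_pow, Real.sqrt_eq_rpow, ← Real.rpow_natCast, ← Real.rpow_mul
          (by positivity), mul_one_div, Real.rpow_natCast]
        gcongr
        exact_mod_cast hker
    _ = _ := (Real.rpow_add (by positivity) _ _).symm

/-- For a nontrivial multiplicative character `η` and a nontrivial additive
character `ψ` of `F_{q^n}`, and a monic divisor `f` of `x^n - 1` of degree `k`,
`|Σ_w η(L_f(w)) ψ(w)| ≤ q^{n/2+k}`. -/
theorem stmt18 {F E : Type*} [Field F] [Fintype F] [Field E] [Fintype E] [Algebra F E]
    (q n k : ℕ) (hq : Fintype.card F = q) (hn : 0 < n) (hdim : Module.finrank F E = n)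
    (f : Polynomial F) (hf : f.Monic) (hdeg : f.natDegree = k)
    (hfd : f ∣ (X ^ n - 1 : Polynomial F))
    (η : MulChar E ℂ) (hη : η ≠ 1) (ψ : AddChar E ℂ) (hψ : ψ ≠ 1) :
    ‖∑ w : E, η (qAssoc q f w) * ψ w‖ ≤
      (q : ℝ) ^ ((n : ℝ) / 2 + (k : ℝ)) :=
  stmt18_general q n k hq hdim f hf hdeg η hη ψ
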